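/- arXiv:2412.07583 — 3 statements merged into one kernel-verified Lean document; each statement's English description precedes it below -/
import Mathlib

section
/- At any KKT point of the problem min_{c,p} Σ_i (p_i − c q_i)² s.t. Σ_i p_i = n, 0 ≤ p_i ≤ 1 with q_1 ≥ … ≥ q_N > 0 and 1 ≤ n < N, all lower-bound multipliers vanish: γ_i = 0 for every i. Equivalently, no inclusion probability is forced to zero by an active lower-bound multiplier. -/
/-- At any KKT point of `min Σ_i (p_i - c q_i)²` s.t. `Σ_i p_i = n`, `0 ≤ p_i ≤ 1`,
with sorted positive `q_1 ≥ … ≥ q_N > 0` and `1 ≤ n < N`, all lower-bound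
multipliers vanish: `γ_i = 0` for every `i`. -/
theorem stmt_5 (N n : ℕ) (hn : 1 ≤ n) (hnN : n < N)
    (q p γ δ : Fin N → ℝ) (c β : ℝ)
    (hq_pos : ∀ i, 0 < q i)
    (hq_sorted : ∀ i j : Fin N, i ≤ j → q j ≤ q i)
    (hbox : ∀ i, 0 ≤ p i ∧ p i ≤ 1)
    (hsum : ∑ i, p i = n)
    (hγ : ∀ i, 0 ≤ γ i) (hδ : ∀ i, 0 ≤ δ i)
    (hcsγ : ∀ i, γ i * p i = 0)
    (hcsδ : ∀ i, δ i * (p i - 1) = 0)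
    (hstat_p : ∀ i, 2 * (p i - c * q i) + β - γ i + δ i = 0)
    (hstat_c : ∑ i, (c * q i - p i) * q i = 0) :
    ∀ i, γ i = 0 := by
  haveI : Nonempty (Fin N) := ⟨⟨0, by omega⟩⟩
  by_contra h
  push_neg at h
  obtain ⟨i, hi⟩ := h
  have hγi : 0 < γ i := lt_of_le_of_ne (hγ i) (Ne.symm hi)
  -- p i = 0 by complementary slackness
  have hpi : p i = 0 := by
    rcases mul_eq_zero.1 (hcsγ i) with h' | h'
    · exact absurd h' hi
    · exact h'
  -- δ i = 0
  have hδi : δ i = 0 := by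
    have h1 := hcsδ i
    rw [hpi] at h1
    linarith
  -- c > 0
  have hk : ∃ k : Fin N, 0 < p k := by
    by_contra hk
    push_neg at hk
    have : (∑ k, p k) ≤ 0 := Finset.sum_nonpos fun k _ => hk k
    rw [hsum] at this
    have : (1 : ℝ) ≤ (n : ℝ) := by exact_mod_cast hn
    linarith
  obtain ⟨k₀, hk₀⟩ := hk
  have hpq_pos : 0 < ∑ j, p j * q j := by
    apply Finset.sum_pos' (fun j _ => mul_nonneg (hbox j).1 (hq_pos j).le)
    exact ⟨k₀, Finset.mem_univ k₀, mul_pos hk₀ (hq_pos k₀)⟩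
  have hqq_pos : 0 < ∑ j, q j * q j :=
    Finset.sum_pos (fun j _ => mul_pos (hq_pos j) (hq_pos j)) Finset.univ_nonempty
  have hc_eq : c * ∑ j, q j * q j = ∑ j, p j * q j := by
    have : ∑ j, ((c * q j) * q j - p j * q j) = 0 := by
      rw [← hstat_c]; apply Finset.sum_congr rfl; intro j _; ring
    rw [Finset.sum_sub_distrib] at this
    rw [Finset.mul_sum]
    have h2 : ∑ j, c * (q j * q j) = ∑ j, (c * q j) * q j := by
      apply Finset.sum_congr rfl; intro j _; ring
    linarith
  have hc : 0 < c := by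
    rcases lt_trichotomy c 0 with h' | h' | h'
    · nlinarith
    · rw [h'] at hc_eq; simp at hc_eq; linarith
    · exact h'
  -- β = 2 c q i + γ i
  have hβ : β = 2 * c * q i + γ i := by
    have := hstat_p i
    rw [hpi, hδi] at this
    linarith
  have hβpos : 0 < β := by
    have := mul_pos hc (hq_pos i); nlinarith
  -- every term of hstat_c sum is positive
  have hpos : ∀ k : Fin N, 0 < (c * q k - p k) * q k := by
    intro k
    rcases eq_or_lt_of_le (hbox k).1 with hp0 | hp0
    · rw [← hp0]
      have := mul_pos hc (hq_pos k)
      nlinarith [hq_pos k]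
    · have hγk : γ k = 0 := by
        rcases mul_eq_zero.1 (hcsγ k) with h' | h'
        · exact h'
        · exact absurd h' (ne_of_gt hp0)
      have hst := hstat_p k
      rw [hγk] at hst
      have hδk := hδ k
      have : 0 < c * q k - p k := by linarith
      exact mul_pos this (hq_pos k)
  have : 0 < ∑ k, (c * q k - p k) * q k :=
    Finset.sum_pos (fun k _ => hpos k) Finset.univ_nonempty
  rw [hstat_c] at this
  exact lt_irrefl 0 this
end

section
/- With the same KKT setup (γ_i = 0 for all i): if δ_k > 0 for some index k, then δ_j > 0 and p_j = 1 for every index j < k (recalling q_1 ≥ q_2 ≥ … ≥ q_N). Hence the set of indices with p_i = 1 forced by an active upper-bound multiplier is a prefix {1,…,t−1} for some t. -/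
/-- With `γ_i = 0` for all `i` (KKT conditions `2(p_i - c q_i) + β + δ_i = 0`,
`δ_i(p_i - 1) = 0`, `δ_i ≥ 0`, `c > 0`, sorted positive `q`): if `δ_k > 0`
for some index `k`, then `δ_j > 0` and `p_j = 1` for every `j < k`.
Hence the indices with an active upper-bound multiplier form a prefix. -/
theorem stmt_6 (N n : ℕ) (hn : 1 ≤ n) (hnN : n < N)
    (q p δ : Fin N → ℝ) (c β : ℝ)
    (hq_pos : ∀ i, 0 < q i)
    (hq_sorted : ∀ i j : Fin N, i ≤ j → q j ≤ q i)
    (hbox : ∀ i, 0 ≤ p i ∧ p i ≤ 1)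
    (hsum : ∑ i, p i = n)
    (hδ : ∀ i, 0 ≤ δ i)
    (hcsδ : ∀ i, δ i * (p i - 1) = 0)
    (hstat_p : ∀ i, 2 * (p i - c * q i) + β + δ i = 0)
    (hc_eq : c = (∑ i, p i * q i) / (∑ i, q i ^ 2))
    (hc_pos : 0 < c) :
    (∀ j k : Fin N, j < k → 0 < δ k → 0 < δ j ∧ p j = 1) ∧
      ∃ t : ℕ, ∀ i : Fin N, 0 < δ i ↔ (i : ℕ) < t := by
  have key : ∀ j k : Fin N, j < k → 0 < δ k → 0 < δ j ∧ p j = 1 := by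
    intro j k hjk hδk
    have hpk : p k = 1 := by
      rcases mul_eq_zero.mp (hcsδ k) with h | h
      · exact absurd h (ne_of_gt hδk)
      · linarith
    have hq : q k ≤ q j := hq_sorted j k (le_of_lt hjk)
    have h1 := hstat_p j
    have h2 := hstat_p k
    have hpj := (hbox j).2
    have hδj : 0 < δ j := by nlinarith
    refine ⟨hδj, ?_⟩
    rcases mul_eq_zero.mp (hcsδ j) with h | h
    · exact absurd h (ne_of_gt hδj)
    · linarith
  refine ⟨key, ?_⟩
  by_cases hS : (Finset.univ.filter (fun i => 0 < δ i)).Nonempty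
  · set S := Finset.univ.filter (fun i => 0 < δ i) with hSdef
    set m := S.max' hS with hm
    have hmS : m ∈ S := S.max'_mem hS
    have hmδ : 0 < δ m := by
      have := hmS; simp [hSdef] at this; exact this
    refine ⟨(m : ℕ) + 1, fun i => ?_⟩
    constructor
    · intro hi
      have hiS : i ∈ S := by simp [hSdef, hi]
      have := S.le_max' i hiS
      have : (i : ℕ) ≤ (m : ℕ) := this
      omega
    · intro hi
      have hile : (i : ℕ) ≤ (m : ℕ) := by omega
      rcases eq_or_lt_of_le hile with h | h
      · have : i = m := Fin.ext h
        rw [this]; exact hmδ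
      · exact (key i m (Fin.lt_def.mpr h) hmδ).1
  · refine ⟨0, fun i => ?_⟩
    constructor
    · intro hi
      exact absurd ⟨i, by simp [hi]⟩ hS
    · omega
end

section
/- Let W₁ ∈ ℝ^{c_inner×c_in} and W₂ ∈ ℝ^{c_out×c_inner} both have full rank c_inner (with c_inner ≤ c_in and c_inner ≤ c_out), and let W₂W₁ = UΣVᵀ be the SVD with rank-c' truncation U_{c'}Σ_{c'}V_{c'}ᵀ. Set F₂ = W₂† U_{c'} Σ_{c'}^{1/2} and F₁ = Σ_{c'}^{1/2} V_{c'}ᵀ W₁†, where † denotes Moore–Penrose pseudoinverse. Then W₂ F₂ F₁ W₁ = U_{c'} Σ_{c'} V_{c'}ᵀ. -/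
open Matrix

/-- Coupled singular initialization: let `W₁ ∈ ℝ^{c_inner×c_in}`,
`W₂ ∈ ℝ^{c_out×c_inner}` have full rank `c_inner`, let `W₂W₁ = U S Vᵀ` be an
SVD, and let `P₁, P₂` be the Moore–Penrose pseudoinverses of `W₁, W₂`
(characterized by the four Penrose equations). With
`F₂ = W₂† U_{c'} Σ_{c'}^{1/2}` and `F₁ = Σ_{c'}^{1/2} V_{c'}ᵀ W₁†`, the merged
matrix satisfies `W₂ F₂ F₁ W₁ = U_{c'} Σ_{c'} V_{c'}ᵀ = U Sc Vᵀ`. -/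
theorem stmt_10 (c_in c_inner c_out c' : ℕ)
    (hc' : c' < c_inner) (h1 : c_inner ≤ c_in) (h2 : c_inner ≤ c_out)
    (W₁ : Matrix (Fin c_inner) (Fin c_in) ℝ)
    (W₂ : Matrix (Fin c_out) (Fin c_inner) ℝ)
    (hrank1 : W₁.rank = c_inner) (hrank2 : W₂.rank = c_inner)
    (U : Matrix (Fin c_out) (Fin c_out) ℝ) (V : Matrix (Fin c_in) (Fin c_in) ℝ)
    (S Sc : Matrix (Fin c_out) (Fin c_in) ℝ) (σ : ℕ → ℝ)
    (hU : U * Uᵀ = 1 ∧ Uᵀ * U = 1)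
    (hV : V * Vᵀ = 1 ∧ Vᵀ * V = 1)
    (hσ_nonneg : ∀ i, 0 ≤ σ i)
    (hσ_sorted : ∀ i j : ℕ, i ≤ j → σ j ≤ σ i)
    (hS : ∀ i j, S i j = if (i : ℕ) = (j : ℕ) then σ i else 0)
    (hSc : ∀ i j, Sc i j = if (i : ℕ) = (j : ℕ) ∧ (i : ℕ) < c' then σ i else 0)
    (hSVD : W₂ * W₁ = U * S * Vᵀ)
    -- Moore–Penrose pseudoinverse of W₁ :
    (P₁ : Matrix (Fin c_in) (Fin c_inner) ℝ)
    (hP₁a : W₁ * P₁ * W₁ = W₁) (hP₁b : P₁ * W₁ * P₁ = P₁)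
    (hP₁c : (W₁ * P₁)ᵀ = W₁ * P₁) (hP₁d : (P₁ * W₁)ᵀ = P₁ * W₁)
    -- Moore–Penrose pseudoinverse of W₂ :
    (P₂ : Matrix (Fin c_inner) (Fin c_out) ℝ)
    (hP₂a : W₂ * P₂ * W₂ = W₂) (hP₂b : P₂ * W₂ * P₂ = P₂)
    (hP₂c : (W₂ * P₂)ᵀ = W₂ * P₂) (hP₂d : (P₂ * W₂)ᵀ = P₂ * W₂)
    -- truncated singular factors: U_{c'} = first c' columns of U, etc.
    (Uc : Matrix (Fin c_out) (Fin c') ℝ)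
    (hUc : ∀ i j, Uc i j = U i ⟨(j : ℕ), lt_of_lt_of_le (j.2.trans hc') h2⟩)
    (Vc : Matrix (Fin c_in) (Fin c') ℝ)
    (hVc : ∀ i j, Vc i j = V i ⟨(j : ℕ), lt_of_lt_of_le (j.2.trans hc') h1⟩)
    (D : Matrix (Fin c') (Fin c') ℝ)
    (hD : D = Matrix.diagonal fun j : Fin c' => Real.sqrt (σ (j : ℕ)))
    (F₂ : Matrix (Fin c_inner) (Fin c') ℝ) (hF₂ : F₂ = P₂ * Uc * D)
    (F₁ : Matrix (Fin c') (Fin c_inner) ℝ) (hF₁ : F₁ = D * Vcᵀ * P₁) :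
    W₂ * F₂ * F₁ * W₁ = U * Sc * Vᵀ := by

  obtain ⟨hU1, hU2⟩ := hU
  obtain ⟨hV1, hV2⟩ := hV
  -- embeddings of Fin c' into Fin c_out and Fin c_in
  set e₂ : Fin c' → Fin c_out := fun j => ⟨(j : ℕ), lt_of_lt_of_le (j.2.trans hc') h2⟩ with he₂
  set e₁ : Fin c' → Fin c_in := fun j => ⟨(j : ℕ), lt_of_lt_of_le (j.2.trans hc') h1⟩ with he₁
  set E : Matrix (Fin c_out) (Fin c') ℝ :=
    Matrix.of fun a k => if (a : ℕ) = (k : ℕ) then (1 : ℝ) else 0 with hE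
  set F : Matrix (Fin c_in) (Fin c') ℝ :=
    Matrix.of fun a k => if (a : ℕ) = (k : ℕ) then (1 : ℝ) else 0 with hF
  have hUcE : Uc = U * E := by
    ext i k
    rw [hUc, Matrix.mul_apply]
    rw [Finset.sum_eq_single (e₂ k)]
    · simp [hE, he₂]
    · intro b _ hb
      have : (b : ℕ) ≠ (k : ℕ) := by
        intro h
        apply hb
        apply Fin.ext
        simpa [he₂] using h
      simp [hE, this]
    · simp
  have hVcF : Vc = V * F := by
    ext i k
    rw [hVc, Matrix.mul_apply]
    rw [Finset.sum_eq_single (e₁ k)]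
    · simp [hF, he₁]
    · intro b _ hb
      have : (b : ℕ) ≠ (k : ℕ) := by
        intro h
        apply hb
        apply Fin.ext
        simpa [he₁] using h
      simp [hF, this]
    · simp
  have hDD : D * D = Matrix.diagonal (fun k : Fin c' => σ (k : ℕ)) := by
    rw [hD, Matrix.diagonal_mul_diagonal]
    exact congrArg Matrix.diagonal (funext fun k => Real.mul_self_sqrt (hσ_nonneg (k : ℕ)))
  have hScE : Sc = E * Matrix.diagonal (fun k : Fin c' => σ (k : ℕ)) * Fᵀ := by
    ext a b
    rw [hSc, Matrix.mul_apply]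
    simp only [Matrix.mul_diagonal, Matrix.transpose_apply]
    by_cases hab : (a : ℕ) = (b : ℕ) ∧ (a : ℕ) < c'
    · obtain ⟨hab1, hab2⟩ := hab
      rw [Finset.sum_eq_single (⟨(a : ℕ), hab2⟩ : Fin c')]
      · simp only [hE, hF, Matrix.of_apply]
        rw [if_pos ⟨hab1, hab2⟩]
        simp [← hab1]
      · intro k _ hk
        have : (a : ℕ) ≠ (k : ℕ) := by
          intro h
          apply hk
          apply Fin.ext
          simp [← h]
        simp [hE, this]
      · simp
    · rw [if_neg hab]
      refine (Finset.sum_eq_zero ?_).symm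
      intro k _
      have : (a : ℕ) ≠ (k : ℕ) ∨ (b : ℕ) ≠ (k : ℕ) := by
        by_contra h
        push_neg at h
        exact hab ⟨h.1.trans h.2.symm, h.1 ▸ k.2⟩
      rcases this with h | h
      · simp [hE, h]
      · simp [hF, h]
  have hL4 : Uc * (D * D) * Vcᵀ = U * Sc * Vᵀ := by
    rw [hDD, hUcE, hVcF, Matrix.transpose_mul, hScE]
    simp only [Matrix.mul_assoc]
  -- truncation diagonals
  set T : Matrix (Fin c_in) (Fin c_in) ℝ :=
    Matrix.diagonal (fun b : Fin c_in => if (b : ℕ) < c' then (1 : ℝ) else 0) with hT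
  set T' : Matrix (Fin c_out) (Fin c_out) ℝ :=
    Matrix.diagonal (fun a : Fin c_out => if (a : ℕ) < c' then (1 : ℝ) else 0) with hT'
  have hScT : Sc = S * T := by
    ext a b
    rw [hSc, hT, Matrix.mul_diagonal, hS]
    by_cases h1' : (a : ℕ) = (b : ℕ) <;> by_cases h2' : (b : ℕ) < c' <;>
      simp [h1', h2'] <;> omega
  have hScT' : Sc = T' * S := by
    ext a b
    rw [hSc, hT', Matrix.diagonal_mul, hS]
    by_cases h1' : (a : ℕ) = (b : ℕ) <;> by_cases h2' : (a : ℕ) < c' <;>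
      simp [h1', h2']
  -- projection identities
  have k1 : W₂ * P₂ * (U * S) = U * S := by
    have h : W₂ * P₂ * (U * S * Vᵀ) = U * S * Vᵀ := by
      rw [← hSVD, ← Matrix.mul_assoc, hP₂a, hSVD]
    have h' := congrArg (fun M => M * V) h
    simp only [Matrix.mul_assoc, hV2, Matrix.mul_one] at h'
    simpa [Matrix.mul_assoc] using h'
  have k2 : S * (Vᵀ * (P₁ * W₁)) = S * Vᵀ := by
    have h : U * S * Vᵀ * (P₁ * W₁) = U * S * Vᵀ := by
      rw [← hSVD, Matrix.mul_assoc W₂ W₁, ← Matrix.mul_assoc W₁, hP₁a]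
    have h' := congrArg (fun M => Uᵀ * M) h
    simp only [← Matrix.mul_assoc] at h'
    simp only [hU2, Matrix.one_mul] at h'
    simpa [Matrix.mul_assoc] using h'
  -- assemble
  rw [hF₂, hF₁]
  have step1 : W₂ * (P₂ * Uc * D) * (D * Vcᵀ * P₁) * W₁
      = W₂ * P₂ * (Uc * (D * D) * Vcᵀ) * (P₁ * W₁) := by
    simp only [Matrix.mul_assoc]
  rw [step1, hL4, hScT]
  have step2 : U * (S * T) * Vᵀ * (P₁ * W₁) = U * S * (T * (Vᵀ * (P₁ * W₁))) := by
    simp only [Matrix.mul_assoc]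
  have step3 : W₂ * P₂ * (U * (S * T) * Vᵀ) * (P₁ * W₁)
      = W₂ * P₂ * (U * S) * (T * (Vᵀ * (P₁ * W₁))) := by
    simp only [Matrix.mul_assoc]
  rw [step3, k1, ← step2, ← hScT, hScT']
  have step4 : U * (T' * S) * Vᵀ * (P₁ * W₁) = U * T' * (S * (Vᵀ * (P₁ * W₁))) := by
    simp only [Matrix.mul_assoc]
  rw [step4, k2, ← Matrix.mul_assoc, Matrix.mul_assoc U, ← hScT']
end
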